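/- Let n ≥ 0 and consider the rank-2 lattice with basis σ, f and pairing σ² = -n, σ·f = 1, f² = 0. Set K = -2σ - (n+2)f. There do not exist classes D_1 = a₁σ + b₁f and D_2 = a₂σ + b₂f with integer coefficients such that D_1·D_2 = 0, D_1·(K + D_1) = 0, D_2·(K + D_2) = 0, D_1 + D_2 + K = 0, and such that there exist rationals x > 0, y > nx with (xσ + yf)·D_1 > 0 and (xσ + yf)·D_2 > 0. -/
import Mathlib


/-- Intersection pairing on the rank-2 lattice of the Hirzebruch surface `H_n`:
`(a₁σ + b₁f)·(a₂σ + b₂f)` with `σ² = -n`, `σ·f = 1`, `f² = 0`. -/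
def hirzPair (n a₁ b₁ a₂ b₂ : ℚ) : ℚ := -n * a₁ * a₂ + a₁ * b₂ + a₂ * b₁

theorem no_two_disjoint_tori_on_hirzebruch (n : ℤ) (hn : 0 ≤ n) :
    ¬ ∃ (a₁ b₁ a₂ b₂ : ℤ),
      hirzPair n a₁ b₁ a₂ b₂ = 0 ∧
      hirzPair n a₁ b₁ (-2 + a₁) (-(n + 2) + b₁) = 0 ∧
      hirzPair n a₂ b₂ (-2 + a₂) (-(n + 2) + b₂) = 0 ∧
      (a₁ + a₂ + (-2) = 0 ∧ b₁ + b₂ + (-(n + 2)) = 0) ∧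
      ∃ (x y : ℚ), 0 < x ∧ (n : ℚ) * x < y ∧
        0 < hirzPair n x y a₁ b₁ ∧ 0 < hirzPair n x y a₂ b₂ := by
  rintro ⟨a₁, b₁, a₂, b₂, h12, hA1, hA2, ⟨ha, hb⟩, x, y, hx, hy, hp1, hp2⟩
  unfold hirzPair at h12 hA1 hA2 hp1 hp2
  -- key integer equation from adjunction for D₁
  have keyQ : ((a₁ : ℚ) - 1) * (2 * b₁ - n * a₁) = 2 * a₁ := by linear_combination hA1
  have key : (a₁ - 1) * (2 * b₁ - n * a₁) = 2 * a₁ := by exact_mod_cast keyQ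
  have hdvd : (a₁ - 1) ∣ 2 := by
    have h1 : (a₁ - 1) ∣ 2 * a₁ := ⟨_, key.symm⟩
    have h2 : (a₁ - 1) ∣ 2 * (a₁ - 1) := ⟨2, by ring⟩
    have := dvd_sub h1 h2
    simpa [mul_sub] using this
  have hne : a₁ - 1 ≠ 0 := by
    intro h
    have : a₁ = 1 := by omega
    rw [this] at key; omega
  have habs : a₁ - 1 ≤ 2 ∧ -2 ≤ a₁ - 1 := by
    constructor
    · exact Int.le_of_dvd (by norm_num) hdvd
    · have := Int.le_of_dvd (by norm_num) hdvd.neg_left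
      omega
  have hb1 : -1 ≤ a₁ := by omega
  have hb2 : a₁ ≤ 3 := by omega
  have hnQ : (0 : ℚ) ≤ (n : ℚ) := by exact_mod_cast hn
  clear hdvd hne habs keyQ h12 hA1 hA2
  interval_cases a₁
  · -- a₁ = -1 : key gives 2b₁ + n = 1
    have hbb : 2 * b₁ = 1 - n := by omega
    push_cast at hp1
    -- hp1 : n*x + x*b₁ - y > 0 , hy : n*x < y  ⇒  x*b₁ > 0 ⇒ b₁ > 0
    have hxb : 0 < x * (b₁ : ℚ) := by nlinarith
    have hbpos : (0 : ℚ) < (b₁ : ℚ) := by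
      by_contra h
      push_neg at h
      nlinarith
    have : (0 : ℤ) < b₁ := by exact_mod_cast hbpos
    omega
  · -- a₁ = 0 : key gives b₁ = 0
    have hbb : b₁ = 0 := by omega
    subst hbb
    push_cast at hp1
    linarith
  · -- a₁ = 1 : key gives 0 = 2
    omega
  · -- a₁ = 2 : key gives b₁ = n + 2, so D₂ = 0
    have hbb : b₁ = n + 2 := by omega
    have ha2 : a₂ = 0 := by omega
    have hb2' : b₂ = 0 := by omega
    subst ha2; subst hb2'
    push_cast at hp2
    linarith
  · -- a₁ = 3 : 2b₁ = 3n + 3, a₂ = -1, 2b₂ = 1 - n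
    have ha2 : a₂ = -1 := by omega
    have hbb : 2 * b₂ = 1 - n := by omega
    subst ha2
    push_cast at hp2
    have hxb : 0 < x * (b₂ : ℚ) := by nlinarith
    have hbpos : (0 : ℚ) < (b₂ : ℚ) := by
      by_contra h
      push_neg at h
      nlinarith
    have : (0 : ℤ) < b₂ := by exact_mod_cast hbpos
    omega
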